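/- arXiv:1205.2856 — 6 statements merged into one kernel-verified Lean document; each statement's English description precedes it below -/
import Mathlib

section
/- Let G be a graph with threshold assignment τ : V(G) → ℤ satisfying τ(v) ≤ deg(v) for all v. A subset D ⊆ V(G) is a τ-dynamic monopoly if and only if G \ D contains no resistant subgraph, where a subgraph K of G is resistant if for every vertex v of K, deg_K(v) ≥ deg_G(v) − τ(v) + 1. -/
open Finset

/-- `D` is a `τ`-dynamic monopoly for `G`: there is a partition
`D₀ ∪ D₁ ∪ ⋯ ∪ D_k` of the vertex set with `D₀ = D` such that every vertex `v ∈ D_{i+1}`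
has at least `τ v` neighbours in `D₀ ∪ ⋯ ∪ D_i`. -/
def DynMono {V : Type*} [Fintype V] [DecidableEq V] (G : SimpleGraph V) [DecidableRel G.Adj]
    (τ : V → ℤ) (D : Finset V) : Prop :=
  ∃ (k : ℕ) (Ds : ℕ → Finset V),
    Ds 0 = D ∧
    (∀ i ≤ k, ∀ j ≤ k, i ≠ j → Disjoint (Ds i) (Ds j)) ∧
    (Finset.range (k + 1)).biUnion Ds = Finset.univ ∧
    (∀ i < k, ∀ v ∈ Ds (i + 1),
      τ v ≤ ((((Finset.range (i + 1)).biUnion Ds).filter (fun u => G.Adj v u)).card : ℤ))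

/-- The induced subgraph of `G` on the vertex set `A` is `κ`-degenerate: the vertices of `A`
can be listed as `v₁, …, v_m` so that for each `i` the degree of `v_i` in the subgraph
induced on `{v₁, …, v_i}` is at most `κ v_i`. -/
def KDegenOn {V : Type*} [DecidableEq V] (G : SimpleGraph V) [DecidableRel G.Adj]
    (κ : V → ℕ) (A : Finset V) : Prop :=
  ∃ l : List V, l.Nodup ∧ l.toFinset = A ∧
    ∀ i : Fin l.length,
      ((l.take i).filter (fun u => decide (G.Adj (l.get i) u))).length ≤ κ (l.get i)

/-- `G` is `k`-degenerate: every nonempty subgraph of `G` has a vertex of degree at most `k`. -/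
def Degen {V : Type*} (G : SimpleGraph V) (k : ℕ) : Prop :=
  ∀ K : G.Subgraph, K.verts.Nonempty → ∃ v ∈ K.verts, (K.neighborSet v).ncard ≤ k

/-- The induced subgraph of `G` on the vertex set `A` is `k`-degenerate: every nonempty
subgraph of it (equivalently, every nonempty induced subgraph on some `S ⊆ A`) has a vertex
of degree at most `k`. -/
def DegenOn {V : Type*} (G : SimpleGraph V) [DecidableRel G.Adj] (k : ℕ) (A : Finset V) : Prop :=
  ∀ S ⊆ A, S.Nonempty → ∃ v ∈ S, (S.filter (fun u => G.Adj v u)).card ≤ k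

/-- A (nonempty) subgraph `K` of `G` is resistant w.r.t. the threshold assignment `τ` if
every vertex `v` of `K` satisfies `deg_K v ≥ deg_G v - τ v + 1`. -/
def Resistant {V : Type*} [Fintype V] (G : SimpleGraph V) [DecidableRel G.Adj]
    (τ : V → ℤ) (K : G.Subgraph) : Prop :=
  K.verts.Nonempty ∧ ∀ v ∈ K.verts, (G.degree v : ℤ) - τ v + 1 ≤ ((K.neighborSet v).ncard : ℤ)

/-! A resistant subgraph `K` disjoint from `D` can never be entered: a vertex `v` of `K` with
all its `K`-neighbours still inactive has at most `deg v - deg_K v ≤ τ v - 1` active neighbours.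
Conversely, the activation process started from `D` grows until it stalls, and if it stalls
before covering `V`, every inactive vertex has fewer than `τ v` active neighbours, which says
exactly that the subgraph induced on the inactive vertices is resistant. -/

lemma Finset.eq_univ_of_ssubset_succ {α : Type*} [Fintype α] {f : ℕ → Finset α} (hf : Monotone f)
    (hlt : ∀ n, f n ≠ univ → f n ⊂ f (n + 1)) : f (Fintype.card α) = univ := by
  have hcard : ∀ n, f n = univ ∨ n ≤ #(f n) := by
    intro n
    induction n with
    | zero => exact .inr (Nat.zero_le _)
    | succ n ih =>
      by_cases hn : f n = univ
      · exact .inl (univ_subset_iff.mp (hn ▸ hf n.le_succ))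
      · have := card_lt_card (hlt n hn)
        have := ih.resolve_left hn
        omega
  exact (hcard _).elim id fun h => eq_univ_of_card _ (le_antisymm (card_le_univ _) h)

section

variable {V : Type*} [Fintype V] [DecidableEq V] {G : SimpleGraph V} [DecidableRel G.Adj]
  {τ : V → ℤ}

lemma card_filter_adj_add_card_compl_filter_adj (M : Finset V) (v : V) :
    #(M.filter (G.Adj v)) + #(Mᶜ.filter (G.Adj v)) = G.degree v := by
  rw [← card_union_of_disjoint
      (disjoint_compl_right.mono (filter_subset _ _) (filter_subset _ _)),
    ← filter_union, union_compl, ← G.neighborFinset_eq_filter, G.card_neighborFinset_eq_degree]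

lemma Resistant.card_filter_adj_lt {K : G.Subgraph} (hK : Resistant G τ K) {B : Finset V}
    (hB : Disjoint (B : Set V) K.verts) {v : V} (hv : v ∈ K.verts) :
    (#(B.filter (G.Adj v)) : ℤ) < τ v := by
  have hsub : K.neighborSet v ⊆ ↑(Bᶜ.filter (G.Adj v)) := fun u hu => by
    simpa using ⟨fun huB => hB.ne_of_mem huB (K.edge_vert hu.symm) rfl, K.adj_sub hu⟩
  have hle := Set.ncard_le_ncard hsub (Finset.finite_toSet _)
  rw [Set.ncard_coe_finset] at hle
  have hdeg := card_filter_adj_add_card_compl_filter_adj (G := G) B v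
  have hres := hK.2 v hv
  omega

lemma resistant_induce_compl {M : Finset V} (hM : Mᶜ.Nonempty)
    (h : ∀ v ∉ M, (#(M.filter (G.Adj v)) : ℤ) < τ v) :
    Resistant G τ ((⊤ : G.Subgraph).induce ((Mᶜ : Finset V) : Set V)) := by
  refine ⟨coe_nonempty.mpr hM, fun v hv => ?_⟩
  have hv : v ∉ M := by simpa using hv
  have hnbr : ((⊤ : G.Subgraph).induce ((Mᶜ : Finset V) : Set V)).neighborSet v =
      ↑(Mᶜ.filter (G.Adj v)) := by
    ext u
    simp [hv]
  rw [hnbr, Set.ncard_coe_finset]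
  have hdeg := card_filter_adj_add_card_compl_filter_adj (G := G) M v
  have := h v hv
  omega

lemma DynMono.exists_mem_of_resistant {D : Finset V} (hD : DynMono G τ D) {K : G.Subgraph}
    (hK : Resistant G τ K) : ∃ v ∈ K.verts, v ∈ D := by
  obtain ⟨k, Ds, hDs0, -, hcover, hstep⟩ := hD
  by_contra! hKD
  have hdisj : ∀ i ≤ k, Disjoint (((range (i + 1)).biUnion Ds : Finset V) : Set V) K.verts := by
    intro i
    induction i with
    | zero =>
      intro _
      simpa [hDs0, Set.disjoint_left] using fun v hvD hvK => hKD v hvK hvD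
    | succ i ih =>
      intro hi
      have ih := ih (by omega)
      rw [range_add_one, biUnion_insert, coe_union, Set.disjoint_union_left]
      refine ⟨Set.disjoint_left.mpr fun v hv hvK => ?_, ih⟩
      exact (hK.card_filter_adj_lt ih hvK).not_ge (hstep i (by omega) v hv)
  obtain ⟨v, hv⟩ := hK.1
  exact (hdisj k le_rfl).ne_of_mem (by simp [hcover]) hv rfl

variable (G τ) in
def activationStep (M : Finset V) : Finset V :=
  M ∪ univ.filter fun v => τ v ≤ #(M.filter (G.Adj v))

variable (G τ) in
def activated (D : Finset V) (n : ℕ) : Finset V :=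
  (activationStep G τ)^[n] D

lemma subset_activationStep (M : Finset V) : M ⊆ activationStep G τ M :=
  subset_union_left

lemma le_card_filter_adj_of_mem_activationStep {M : Finset V} {v : V}
    (hv : v ∈ activationStep G τ M) (hvM : v ∉ M) : τ v ≤ #(M.filter (G.Adj v)) := by
  simpa [activationStep, hvM] using hv

@[simp]
lemma activated_zero (D : Finset V) : activated G τ D 0 = D := rfl

lemma activated_succ (D : Finset V) (n : ℕ) :
    activated G τ D (n + 1) = activationStep G τ (activated G τ D n) :=
  Function.iterate_succ_apply' _ _ _

lemma monotone_activated (D : Finset V) : Monotone (activated G τ D) :=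
  monotone_nat_of_le_succ fun n => by
    rw [activated_succ]
    exact subset_activationStep _

lemma activated_card_eq_univ {D : Finset V}
    (hD : ¬ ∃ K : G.Subgraph, Resistant G τ K ∧ ∀ v ∈ K.verts, v ∉ D) :
    activated G τ D (Fintype.card V) = univ := by
  refine Finset.eq_univ_of_ssubset_succ (monotone_activated D) fun n hn => ?_
  refine (Finset.ssubset_iff_subset_ne.mpr ⟨monotone_activated D n.le_succ, fun heq => hD ?_⟩)
  have hstuck : ∀ v ∉ activated G τ D n,
      (#((activated G τ D n).filter (G.Adj v)) : ℤ) < τ v := fun v hvM => by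
    by_contra! hle
    apply hvM
    rw [heq, activated_succ]
    exact mem_union_right _ (mem_filter.mpr ⟨mem_univ _, hle⟩)
  have hne : (activated G τ D n)ᶜ.Nonempty := by
    rwa [← compl_ne_univ_iff_nonempty, compl_compl]
  refine ⟨_, resistant_induce_compl hne hstuck, fun v hv hvD => ?_⟩
  exact (mem_compl.mp (by simpa using hv)) (monotone_activated D (Nat.zero_le n) hvD)

lemma dynMono_of_activated_eq_univ {D : Finset V} {k : ℕ} (hk : activated G τ D k = univ) :
    DynMono G τ D := by
  have hmono := monotone_activated (G := G) (τ := τ) D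
  have hlayers : ∀ n, (range (n + 1)).biUnion (disjointed (activated G τ D)) = activated G τ D n :=
    fun n => by
      rw [← sup_eq_biUnion, ← partialSups_eq_sup_range, partialSups_disjointed,
        hmono.partialSups_eq]
  refine ⟨k, disjointed (activated G τ D), by simp [disjointed_zero],
    fun i _ j _ hij => disjoint_disjointed _ hij, (hlayers k).trans hk, fun i _ v hv => ?_⟩
  rw [← Order.succ_eq_add_one, hmono.disjointed_succ (not_isMax i), Order.succ_eq_add_one,
    mem_sdiff, activated_succ] at hv
  rw [hlayers]
  exact le_card_filter_adj_of_mem_activationStep hv.1 hv.2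

end

theorem stmt1_general {V : Type*} [Fintype V] [DecidableEq V] (G : SimpleGraph V) [DecidableRel G.Adj]
    (τ : V → ℤ) (D : Finset V) :
    DynMono G τ D ↔
      ¬ ∃ K : G.Subgraph, Resistant G τ K ∧ ∀ v ∈ K.verts, v ∉ D := by
  refine ⟨fun hD ⟨K, hK, hKD⟩ => ?_,
    fun hD => dynMono_of_activated_eq_univ (activated_card_eq_univ hD)⟩
  obtain ⟨v, hvK, hvD⟩ := hD.exists_mem_of_resistant hK
  exact hKD v hvK hvD

theorem stmt1 {V : Type*} [Fintype V] [DecidableEq V] (G : SimpleGraph V) [DecidableRel G.Adj]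
    (τ : V → ℤ) (hτ : ∀ v, τ v ≤ G.degree v) (D : Finset V) :
    DynMono G τ D ↔
      ¬ ∃ K : G.Subgraph, Resistant G τ K ∧ ∀ v ∈ K.verts, v ∉ D :=
  stmt1_general G τ D
end

section
/- Let G be a finite simple graph and let κ : V(G) → ℕ and τ : V(G) → ℤ satisfy τ(v) + κ(v) = deg_G(v) for every vertex v. Then a subset M ⊆ V(G) is a τ-dynamic monopoly if and only if the induced subgraph G \ M is κ-degenerate. -/
open Finset

/-!
Both notions are equivalent to the existence of a rank function on the vertices. Activating the
vertices of a dynamic monopoly stage by stage, a vertex `v` activated at a positive stage has at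
least `τ v` neighbours of smaller stage, i.e. at most `deg v - τ v = κ v` neighbours of stage at
least its own; conversely a degeneracy ordering of `G \ M`, read backwards, activates one vertex
per stage. So both sides say: there is a rank `f` with `f⁻¹' {0} = M` under which every vertex
outside `M` has at most `κ v` neighbours of rank at least its own.
-/

namespace KDegenOn

variable {V : Type*} [DecidableEq V] {G : SimpleGraph V} [DecidableRel G.Adj] {κ : V → ℕ}

theorem empty : KDegenOn G κ ∅ :=
  ⟨[], List.nodup_nil, rfl, fun i => i.elim0⟩

theorem insert {A : Finset V} {v : V} (hA : KDegenOn G κ A) (hv : v ∉ A)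
    (hdeg : (A.filter (G.Adj v)).card ≤ κ v) : KDegenOn G κ (insert v A) := by
  obtain ⟨l, hnd, rfl, hl⟩ := hA
  have hvl : v ∉ l := by simpa using hv
  refine ⟨l ++ [v], by simpa using hnd.concat hvl, by ext; simp, fun ⟨i, hi⟩ => ?_⟩
  simp only [List.length_append, List.length_singleton] at hi
  rcases Nat.lt_succ_iff_lt_or_eq.1 hi with hi | rfl
  · simpa [List.getElem_append_left hi, List.take_append_of_le_length hi.le] using hl ⟨i, hi⟩
  · simpa [← List.toFinset_card_of_nodup (hnd.filter _), List.toFinset_filter] using hdeg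

theorem of_rank (f : V → ℕ) (A : Finset V)
    (hf : ∀ v ∈ A, (A.filter fun u => G.Adj v u ∧ f v ≤ f u).card ≤ κ v) :
    KDegenOn G κ A := by
  induction A using Finset.strongInduction with
  | H A ih =>
    rcases A.eq_empty_or_nonempty with rfl | hne
    · exact empty
    obtain ⟨v, hv, hmin⟩ := A.exists_min_image f hne
    have herase : KDegenOn G κ (A.erase v) := by
      refine ih _ (A.erase_ssubset hv) fun u hu =>
        le_trans (Finset.card_le_card ?_) (hf u (A.mem_of_mem_erase hu))
      exact Finset.monotone_filter_left _ (A.erase_subset v)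
    rw [← A.insert_erase hv]
    refine herase.insert (A.notMem_erase v) (le_trans (Finset.card_le_card ?_) (hf v hv))
    intro u hu
    simp only [Finset.mem_filter, Finset.mem_erase] at hu ⊢
    exact ⟨hu.1.2, hu.2, hmin u hu.1.2⟩

theorem exists_rank {A : Finset V} (hA : KDegenOn G κ A) :
    ∃ f : V → ℕ,
      ∀ v ∈ A, (A.filter fun u => G.Adj v u ∧ f v ≤ f u).card ≤ κ v := by
  obtain ⟨l, -, rfl, hl⟩ := hA
  refine ⟨fun u => l.length - l.idxOf u, fun v hv => ?_⟩
  rw [List.mem_toFinset] at hv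
  have hi : l.idxOf v < l.length := List.idxOf_lt_length_of_mem hv
  have hdeg := hl ⟨_, hi⟩
  simp only [List.get_eq_getElem, List.getElem_idxOf] at hdeg
  refine le_trans (Finset.card_le_card ?_) (le_trans (List.toFinset_card_le _) hdeg)
  intro u hu
  simp only [Finset.mem_filter, List.mem_toFinset] at hu
  obtain ⟨hu, hadj, hle⟩ := hu
  have hne : l.idxOf u ≠ l.idxOf v :=
    fun h => G.ne_of_adj hadj ((List.idxOf_inj hu).1 h).symm
  have := List.idxOf_lt_length_of_mem hu
  simp only [List.mem_toFinset, List.mem_filter, decide_eq_true_eq]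
  exact ⟨(List.mem_take_iff_idxOf_lt hu).2 (by omega), hadj⟩

end KDegenOn

theorem kDegenOn_iff_exists_rank {V : Type*} [DecidableEq V] (G : SimpleGraph V)
    [DecidableRel G.Adj] (κ : V → ℕ) (A : Finset V) :
    KDegenOn G κ A ↔
      ∃ f : V → ℕ, ∀ v ∈ A, (A.filter fun u => G.Adj v u ∧ f v ≤ f u).card ≤ κ v :=
  ⟨KDegenOn.exists_rank, fun ⟨f, hf⟩ => KDegenOn.of_rank f A hf⟩

section DynMono

variable {V : Type*} [Fintype V] [DecidableEq V] (G : SimpleGraph V) [DecidableRel G.Adj]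

theorem dynMono_iff_exists_rank (τ : V → ℤ) (M : Finset V) :
    DynMono G τ M ↔ ∃ f : V → ℕ, (∀ v, f v = 0 ↔ v ∈ M) ∧
      ∀ v ∉ M, τ v ≤ ((G.neighborFinset v).filter fun u => f u < f v).card := by
  constructor
  · rintro ⟨k, Ds, hD0, hdisj, hcover, hthr⟩
    have hmem : ∀ v, ∃ j ≤ k, v ∈ Ds j := fun v => by
      have hv : v ∈ (Finset.range (k + 1)).biUnion Ds := hcover ▸ Finset.mem_univ v
      simpa [Nat.lt_succ_iff] using hv
    choose f hfk hf using hmem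
    have hstage : ∀ {v j}, j ≤ k → v ∈ Ds j → f v = j := fun {v j} hj hv => by
      by_contra hne
      exact Finset.disjoint_left.1 (hdisj _ (hfk v) _ hj hne) (hf v) hv
    have hzero : ∀ v, f v = 0 ↔ v ∈ M :=
      fun v => ⟨fun h0 => hD0 ▸ h0 ▸ hf v, fun hv => hstage k.zero_le (hD0 ▸ hv)⟩
    refine ⟨f, hzero, fun v hv => ?_⟩
    obtain ⟨i, hi⟩ := Nat.exists_eq_add_one.2 (Nat.pos_of_ne_zero (mt (hzero v).1 hv))
    have hik : i < k := by have := hfk v; omega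
    refine (hthr i hik v (hi ▸ hf v)).trans (Int.ofNat_le.2 (Finset.card_le_card ?_))
    intro u hu
    simp only [Finset.mem_filter, Finset.mem_biUnion, Finset.mem_range] at hu
    obtain ⟨⟨j, hj, hu⟩, hadj⟩ := hu
    simp only [Finset.mem_filter, SimpleGraph.mem_neighborFinset]
    exact ⟨hadj, by rw [hstage (by omega) hu]; omega⟩
  · rintro ⟨f, hf0, hf⟩
    have hbiUnion : ∀ n, (Finset.range n).biUnion (fun j => Finset.univ.filter (f · = j)) =
        Finset.univ.filter (f · < n) := fun n => by ext; simp
    refine ⟨Finset.univ.sup f, fun j => Finset.univ.filter (f · = j), by ext; simp [hf0],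
      ?_, ?_, ?_⟩
    · intro i _ j _ hij
      exact Finset.disjoint_filter.2 fun v _ hi hj => hij (hi ▸ hj)
    · rw [hbiUnion]
      ext v
      simpa [Nat.lt_succ_iff] using Finset.le_sup (f := f) (Finset.mem_univ v)
    · intro i _ v hv
      simp only [Finset.mem_filter, Finset.mem_univ, true_and] at hv
      refine (hf v (by rw [← hf0]; omega)).trans_eq ?_
      rw [hbiUnion, hv]
      congr 2
      ext u
      simp [and_comm]

end DynMono

theorem le_card_filter_lt_iff {V : Type*} [Fintype V] (G : SimpleGraph V) [DecidableRel G.Adj]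
    {κ : V → ℕ} {τ : V → ℤ} {v : V} (h : τ v + κ v = G.degree v) (f : V → ℕ) :
    τ v ≤ ((G.neighborFinset v).filter fun u => f u < f v).card ↔
      ((G.neighborFinset v).filter fun u => f v ≤ f u).card ≤ κ v := by
  have hsplit := (G.neighborFinset v).card_filter_add_card_filter_not (fun u => f u < f v)
  simp only [not_lt, SimpleGraph.card_neighborFinset_eq_degree] at hsplit
  omega

theorem stmt2 {V : Type*} [Fintype V] [DecidableEq V] (G : SimpleGraph V) [DecidableRel G.Adj]
    (κ : V → ℕ) (τ : V → ℤ) (h : ∀ v, τ v + κ v = G.degree v) (M : Finset V) :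
    DynMono G τ M ↔ KDegenOn G κ Mᶜ := by
  rw [dynMono_iff_exists_rank, kDegenOn_iff_exists_rank]
  constructor
  · rintro ⟨f, -, hf⟩
    refine ⟨f, fun v hv => le_trans (Finset.card_le_card ?_)
      ((le_card_filter_lt_iff G (h v) f).1 (hf v (Finset.mem_compl.1 hv)))⟩
    intro u
    simp +contextual
  · rintro ⟨g, hg⟩
    refine ⟨fun v => if v ∈ M then 0 else g v + 1, by simp, fun v hv => ?_⟩
    refine (le_card_filter_lt_iff G (h v) _).2
      (le_trans (Finset.card_le_card ?_) (hg v (Finset.mem_compl.2 hv)))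
    intro u
    by_cases hu : u ∈ M <;> simp [hv, hu]
end

section
/- If G is κ-degenerate and |E(G)| = Σ_{v ∈ V(G)} κ(v), then there exists a vertex v of G with deg_G(v) = κ(v). -/
/-!
Listing the vertices in a degeneracy order, every edge is counted exactly once as a back-edge
of its later endpoint, so the back-degrees sum to `|E(G)| = ∑ κ`. Since each back-degree is at
most `κ`, they all equal `κ`; and the last vertex of the order has all its neighbours behind it,
so its degree is its back-degree.
-/

open Finset

namespace SimpleGraph

variable {V α : Type*} [Fintype V] (G : SimpleGraph V) [DecidableRel G.Adj] [LinearOrder α]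

def backDegree (r : V → α) (v : V) : ℕ := #{u | G.Adj v u ∧ r u < r v}

theorem degree_eq_backDegree_add {r : V → α} (hr : Function.Injective r) (v : V) :
    G.degree v = G.backDegree r v + #{u | G.Adj v u ∧ r v < r u} := by
  rw [← card_neighborFinset_eq_degree, neighborFinset_eq_filter, backDegree,
    ← card_filter_add_card_filter_not (p := fun u => r u < r v), filter_filter, filter_filter]
  congr 2
  ext u
  simp only [mem_filter, mem_univ, true_and, not_lt, and_congr_right_iff]
  intro hadj
  have hne : r v ≠ r u := hr.ne (G.ne_of_adj hadj)
  exact ⟨fun h => lt_of_le_of_ne h hne, le_of_lt⟩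

theorem sum_backDegree_eq_sum_card_adj_lt (r : V → α) :
    ∑ v, G.backDegree r v = ∑ v, #{u | G.Adj v u ∧ r v < r u} := by
  simp only [backDegree, card_filter]
  rw [sum_comm]
  simp only [G.adj_comm]

theorem sum_backDegree_eq_card_edgeFinset {r : V → α} (hr : Function.Injective r) :
    ∑ v, G.backDegree r v = #G.edgeFinset := by
  have hdeg : ∑ v, G.degree v = ∑ v, G.backDegree r v + ∑ v, #{u | G.Adj v u ∧ r v < r u} := by
    rw [← sum_add_distrib]
    exact sum_congr rfl fun v _ => G.degree_eq_backDegree_add hr v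
  have := G.sum_degrees_eq_twice_card_edges
  rw [G.sum_backDegree_eq_sum_card_adj_lt r] at hdeg ⊢
  omega

theorem backDegree_eq_degree_of_forall_le {r : V → α} (hr : Function.Injective r) {v : V}
    (hv : ∀ u, r u ≤ r v) : G.backDegree r v = G.degree v := by
  rw [G.degree_eq_backDegree_add hr v, left_eq_add, card_eq_zero, filter_eq_empty_iff]
  exact fun u _ h => (hv u).not_gt h.2

theorem exists_injective_backDegree_le_of_kDegenOn [DecidableEq V] {κ : V → ℕ}
    (h : KDegenOn G κ univ) : ∃ r : V → ℕ, Function.Injective r ∧ ∀ v, G.backDegree r v ≤ κ v := by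
  obtain ⟨l, hnd, hto, hle⟩ := h
  have hmem (v : V) : v ∈ l := by rw [← List.mem_toFinset, hto]; exact mem_univ v
  refine ⟨(l.idxOf ·), fun u v huv => (List.idxOf_inj (hmem u)).1 huv, fun v => ?_⟩
  have hv := hle ⟨l.idxOf v, List.idxOf_lt_length_of_mem (hmem v)⟩
  rw [List.idxOf_get] at hv
  have hnd' : ((l.take (l.idxOf v)).filter (fun u => decide (G.Adj v u))).Nodup :=
    (List.filter_sublist.trans (List.take_sublist _ _)).nodup hnd
  rw [← List.toFinset_card_of_nodup hnd'] at hv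
  refine le_of_eq_of_le (congrArg card ?_) hv
  ext u
  simp [List.mem_take_iff_idxOf_lt (hmem u), and_comm]

end SimpleGraph

theorem stmt4 {V : Type*} [Fintype V] [DecidableEq V] (G : SimpleGraph V) [DecidableRel G.Adj]
    (κ : V → ℕ) (h : KDegenOn G κ Finset.univ) (he : G.edgeFinset.card = ∑ v : V, κ v)
    (hne : Nonempty V) :
    ∃ v : V, G.degree v = κ v := by
  obtain ⟨r, hr, hle⟩ := G.exists_injective_backDegree_le_of_kDegenOn h
  have hsum : ∑ v, G.backDegree r v = ∑ v, κ v := by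
    rw [G.sum_backDegree_eq_card_edgeFinset hr, he]
  have hback (v : V) : G.backDegree r v = κ v :=
    (sum_eq_sum_iff_of_le fun v _ => hle v).1 hsum v (mem_univ v)
  obtain ⟨v, -, hv⟩ := exists_max_image univ r (univ_nonempty_iff.2 hne)
  exact ⟨v, (G.backDegree_eq_degree_of_forall_le hr fun u => hv u (mem_univ u)).symm.trans
    (hback v)⟩
end

section
/- For every finite simple graph G and every non-negative integer k, there exists a k-degenerate induced subgraph H of G such that |V(H)| ≥ Σ_{v ∈ V(G)} min{1, (k+1)/(deg_G(v)+1)}. -/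
/-!
Order the vertices uniformly at random and keep the vertices with at most `k` earlier
neighbours. The kept set is `k`-degenerate: in any nonempty subset, its last vertex has at most
`k` neighbours in the subset. A vertex `v` is kept iff its rank among itself and its `deg v`
neighbours is at most `k + 1`; by symmetry this rank is uniform, so `v` is kept with probability
`min 1 ((k + 1) / (deg v + 1))`. Some ordering therefore keeps at least the expected number.
-/

open Finset

section Rank

variable {V α : Type*} [LinearOrder α] {A : Finset V} {f : V → α} {v w : V}

def rankIn (A : Finset V) (f : V → α) (v : V) : ℕ := #{w ∈ A | f w ≤ f v}

lemma rankIn_mem_Icc (hv : v ∈ A) : rankIn A f v ∈ Icc 1 #A :=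
  mem_Icc.2 ⟨card_pos.2 ⟨v, mem_filter.2 ⟨hv, le_rfl⟩⟩, card_le_card (filter_subset _ _)⟩

lemma rankIn_lt_rankIn (hw : w ∈ A) (hvw : f v < f w) : rankIn A f v < rankIn A f w := by
  refine card_lt_card ⟨fun u hu => ?_, fun h => ?_⟩
  · rw [mem_filter] at hu ⊢
    exact ⟨hu.1, hu.2.trans hvw.le⟩
  · exact (mem_filter.1 (h (mem_filter.2 ⟨hw, le_rfl⟩))).2.not_gt hvw

lemma injOn_rankIn (hf : Function.Injective f) : Set.InjOn (rankIn A f) A := by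
  intro v hv w hw h
  by_contra hne
  rcases lt_or_gt_of_ne (hf.ne hne) with hvw | hwv
  · exact (rankIn_lt_rankIn hw hvw).ne h
  · exact (rankIn_lt_rankIn hv hwv).ne' h

lemma image_rankIn (hf : Function.Injective f) : A.image (rankIn A f) = Icc 1 #A :=
  eq_of_subset_of_card_le (image_subset_iff.2 fun _ hv => rankIn_mem_Icc hv) <| by
    rw [card_image_of_injOn (injOn_rankIn hf), Nat.card_Icc, Nat.add_sub_cancel]

lemma card_filter_rankIn_le (hf : Function.Injective f) (j : ℕ) :
    #{w ∈ A | rankIn A f w ≤ j} = min j #A := by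
  calc #{w ∈ A | rankIn A f w ≤ j}
      = #{i ∈ A.image (rankIn A f) | i ≤ j} := by
        rw [filter_image, card_image_of_injOn ((injOn_rankIn hf).mono (filter_subset _ _))]
    _ = #(Icc 1 (min j #A)) := by
        rw [image_rankIn hf]
        congr 1
        ext i
        simp only [mem_filter, mem_Icc, le_min_iff]
        tauto
    _ = min j #A := by rw [Nat.card_Icc, Nat.add_sub_cancel]

lemma rankIn_comp_perm (σ : Equiv.Perm V) (hσ : ∀ u, u ∈ A ↔ σ u ∈ A) :
    rankIn A (f ∘ σ) v = rankIn A f (σ v) :=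
  card_equiv σ fun u => by simp only [mem_filter, Function.comp_apply, hσ u]

end Rank

section RandomOrdering

variable {V α : Type*} [Fintype V] [DecidableEq V] [Fintype α] [DecidableEq α] [LinearOrder α]
  {A : Finset V} {v w : V}

lemma card_rankIn_le_eq_of_mem (hv : v ∈ A) (hw : w ∈ A) (j : ℕ) :
    #{f : V ≃ α | rankIn A f w ≤ j} = #{f : V ≃ α | rankIn A f v ≤ j} := by
  have hσ : ∀ u, u ∈ A ↔ Equiv.swap v w u ∈ A := fun u => by
    rcases eq_or_ne u v with rfl | hu
    · simp [hv, hw]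
    rcases eq_or_ne u w with rfl | hu'
    · simp [hv, hw]
    · rw [Equiv.swap_apply_of_ne_of_ne hu hu']
  have hrank (f : V ≃ α) (u : V) :
      rankIn A ((Equiv.swap v w).trans f) u = rankIn A f (Equiv.swap v w u) := by
    rw [Equiv.coe_trans, rankIn_comp_perm _ hσ]
  have hinv (f : V ≃ α) : (Equiv.swap v w).trans ((Equiv.swap v w).trans f) = f :=
    Equiv.ext fun x => by simp
  refine card_nbij' (fun f => (Equiv.swap v w).trans f) (fun f => (Equiv.swap v w).trans f)
    (fun f hf => ?_) (fun f hf => ?_) (fun f _ => hinv f) (fun f _ => hinv f)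
  · rw [mem_coe, mem_filter, hrank, Equiv.swap_apply_left] at *
    exact ⟨mem_univ _, hf.2⟩
  · rw [mem_coe, mem_filter, hrank, Equiv.swap_apply_right] at *
    exact ⟨mem_univ _, hf.2⟩

lemma card_rankIn_le_mul_card (hv : v ∈ A) (j : ℕ) :
    #{f : V ≃ α | rankIn A f v ≤ j} * #A = min j #A * Fintype.card (V ≃ α) := by
  calc #{f : V ≃ α | rankIn A f v ≤ j} * #A
      = ∑ w ∈ A, #{f : V ≃ α | rankIn A f w ≤ j} := by
        rw [sum_congr rfl fun w hw => card_rankIn_le_eq_of_mem hv hw j, sum_const, smul_eq_mul,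
          mul_comm]
    _ = ∑ f : V ≃ α, #{w ∈ A | rankIn A f w ≤ j} :=
        (sum_card_bipartiteAbove_eq_sum_card_bipartiteBelow _).symm
    _ = min j #A * Fintype.card (V ≃ α) := by
        rw [sum_congr rfl fun f _ => card_filter_rankIn_le f.injective j, sum_const, card_univ,
          smul_eq_mul, mul_comm]

end RandomOrdering

namespace SimpleGraph

variable {V α : Type*} [Fintype V] [LinearOrder α] (G : SimpleGraph V) [DecidableRel G.Adj]

def backNeighborFinset (f : V → α) (v : V) : Finset V := {u ∈ G.neighborFinset v | f u < f v}

def lowBackDegreeSet (k : ℕ) (f : V → α) : Finset V := {v | #(G.backNeighborFinset f v) ≤ k}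

variable {G}

lemma rankIn_insert_neighborFinset [DecidableEq V] {f : V → α} (hf : Function.Injective f)
    (v : V) :
    rankIn (insert v (G.neighborFinset v)) f v = #(G.backNeighborFinset f v) + 1 := by
  have hle_iff_lt : {u ∈ G.neighborFinset v | f u ≤ f v} = G.backNeighborFinset f v :=
    filter_congr fun u hu =>
      (hf.ne (G.ne_of_adj ((G.mem_neighborFinset v u).1 hu)).symm).le_iff_lt
  have hv : v ∉ G.backNeighborFinset f v := fun h =>
    G.notMem_neighborFinset_self v (mem_filter.1 h).1
  rw [rankIn, filter_insert, if_pos le_rfl, hle_iff_lt, card_insert_of_notMem hv]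

lemma degenOn_lowBackDegreeSet {f : V → α} (hf : Function.Injective f) (k : ℕ) :
    DegenOn G k (G.lowBackDegreeSet k f) := by
  intro S hS hSne
  obtain ⟨v, hvS, hmax⟩ := S.exists_max_image f hSne
  refine ⟨v, hvS, (card_le_card fun u hu => ?_).trans (mem_filter.1 (hS hvS)).2⟩
  obtain ⟨huS, hadj⟩ := mem_filter.1 hu
  exact mem_filter.2 ⟨(G.mem_neighborFinset v u).2 hadj,
    (hmax u huS).lt_of_ne (hf.ne (G.ne_of_adj hadj).symm)⟩

variable [DecidableEq V] [Fintype α] [DecidableEq α]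

lemma card_filter_card_backNeighborFinset_le (k : ℕ) (v : V) :
    (#{f : V ≃ α | #(G.backNeighborFinset f v) ≤ k} : ℚ)
      = min 1 (((k : ℚ) + 1) / ((G.degree v : ℚ) + 1)) * Fintype.card (V ≃ α) := by
  have hcount := card_rankIn_le_mul_card (α := α) (mem_insert_self v (G.neighborFinset v)) (k + 1)
  rw [card_insert_of_notMem (G.notMem_neighborFinset_self v), card_neighborFinset_eq_degree]
    at hcount
  have hfilter : #{f : V ≃ α | #(G.backNeighborFinset f v) ≤ k}
      = #{f : V ≃ α | rankIn (insert v (G.neighborFinset v)) f v ≤ k + 1} := by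
    refine congrArg card (filter_congr fun f _ => ?_)
    rw [rankIn_insert_neighborFinset f.injective, Nat.add_le_add_iff_right]
  have hd : (0 : ℚ) < G.degree v + 1 := by positivity
  have hmin : min 1 (((k : ℚ) + 1) / ((G.degree v : ℚ) + 1))
      = ((min (k + 1) (G.degree v + 1) : ℕ) : ℚ) / ((G.degree v : ℚ) + 1) := by
    rw [Nat.cast_min, ← min_div_div_right hd.le]
    push_cast
    rw [div_self hd.ne', min_comm]
  rw [hfilter, hmin, div_mul_eq_mul_div, eq_div_iff hd.ne']
  exact_mod_cast hcount

end SimpleGraph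

theorem stmt9 {V : Type*} [Fintype V] [DecidableEq V] (G : SimpleGraph V) [DecidableRel G.Adj]
    (k : ℕ) :
    ∃ H : Finset V, DegenOn G k H ∧
      (∑ v : V, min 1 (((k : ℚ) + 1) / ((G.degree v : ℚ) + 1))) ≤ H.card := by
  let Ω := V ≃ Fin (Fintype.card V)
  have hΩ : (univ : Finset Ω).Nonempty := ⟨Fintype.equivFin V, mem_univ _⟩
  have hdouble : ∑ f : Ω, (#(G.lowBackDegreeSet k f) : ℚ)
      = ∑ v : V, (#{f : Ω | #(G.backNeighborFinset f v) ≤ k} : ℚ) := by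
    exact_mod_cast sum_card_bipartiteAbove_eq_sum_card_bipartiteBelow
      (fun (f : Ω) (v : V) => #(G.backNeighborFinset f v) ≤ k)
  have hmean : ∑ _f : Ω, ∑ v : V, min 1 (((k : ℚ) + 1) / ((G.degree v : ℚ) + 1))
      = ∑ f : Ω, (#(G.lowBackDegreeSet k f) : ℚ) := by
    rw [hdouble, sum_const, card_univ, nsmul_eq_mul, mul_sum]
    exact sum_congr rfl fun v _ => by
      rw [SimpleGraph.card_filter_card_backNeighborFinset_le, mul_comm]
  obtain ⟨f, -, hf⟩ := exists_le_of_sum_le hΩ hmean.le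
  exact ⟨_, SimpleGraph.degenOn_lowBackDegreeSet f.injective k, hf⟩
end

section
/- Let G be a graph with threshold assignment τ, let D be a τ-dynamic monopoly, set H = G \ D, and let τ_max be the maximum threshold among vertices of H. Then Σ_{v ∈ H} τ(v) ≤ |E(G)| − |E(G[D])| − δ(G) + τ_max, where δ(G) is the minimum degree of G and G[D] is the subgraph induced by D. -/
open Finset

/-! Rank the vertices by their activation round and let `w` be a vertex of `H = G \ D` of maximal
rank. Every other `v ∈ H` has at least `τ v` edges to neighbours of smaller rank. These lower
edges are distinct for distinct `v`, none lies inside `D` (it contains `v ∉ D`) and none contains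
`w` (its rank would exceed that of `v`). Together with the edges of `G[D]` and the
`deg w ≥ δ(G)` edges at `w` they form pairwise disjoint sets of edges of `G`, and `τ w ≤ τ_max`
accounts for `w` itself. -/

theorem DynMono.exists_rank {V : Type*} [Fintype V] [DecidableEq V] {G : SimpleGraph V}
    [DecidableRel G.Adj] {τ : V → ℤ} {D : Finset V} (hD : DynMono G τ D) :
    ∃ r : V → ℕ, ∀ v ∉ D, τ v ≤ #{u ∈ G.neighborFinset v | r u < r v} := by
  obtain ⟨k, Ds, h0, -, hcover, hthr⟩ := hD
  have hmem : ∀ v, ∃ i ∈ range (k + 1), v ∈ Ds i := fun v =>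
    mem_biUnion.mp (hcover ▸ mem_univ v)
  have hex : ∀ v, ∃ i, v ∈ Ds i := fun v => (hmem v).imp fun _ => And.right
  classical
  let r v := Nat.find (hex v)
  have hr_min : ∀ {u j}, u ∈ Ds j → r u ≤ j := fun h => Nat.find_min' _ h
  refine ⟨r, fun v hv => ?_⟩
  have hr_le : r v ≤ k := by
    obtain ⟨j, hj, hvj⟩ := hmem v
    exact (hr_min hvj).trans (Nat.lt_succ_iff.mp (mem_range.mp hj))
  obtain ⟨i, hi⟩ : ∃ i, r v = i + 1 :=
    Nat.exists_eq_add_one_of_ne_zero fun h => hv (h0 ▸ h ▸ Nat.find_spec (hex v))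
  refine (hthr i (by omega) v (hi ▸ Nat.find_spec (hex v))).trans
    (Nat.cast_le.mpr (card_le_card fun u hu => ?_))
  obtain ⟨hu, hadj⟩ := mem_filter.mp hu
  obtain ⟨j, hj, huj⟩ := mem_biUnion.mp hu
  exact mem_filter.mpr ⟨(G.mem_neighborFinset v u).mpr hadj,
    (hr_min huj).trans_lt (hi ▸ mem_range.mp hj)⟩

namespace SimpleGraph

variable {V : Type*} [Fintype V] [DecidableEq V] (G : SimpleGraph V) [DecidableRel G.Adj]
  (r : V → ℕ) {D S : Finset V} {v w : V}

def lowerEdges (v : V) : Finset (Sym2 V) :=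
  {u ∈ G.neighborFinset v | r u < r v}.image (s(v, ·))

variable {G r}

theorem card_lowerEdges : #(G.lowerEdges r v) = #{u ∈ G.neighborFinset v | r u < r v} :=
  card_image_of_injective _ fun _ _ => Sym2.congr_right.mp

theorem mem_lowerEdges {e : Sym2 V} :
    e ∈ G.lowerEdges r v ↔ ∃ u, G.Adj v u ∧ r u < r v ∧ s(v, u) = e := by
  simp [lowerEdges, and_assoc]

theorem lowerEdges_subset_edgeFinset : G.lowerEdges r v ⊆ G.edgeFinset := by
  intro e he
  obtain ⟨u, hadj, -, rfl⟩ := mem_lowerEdges.mp he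
  exact G.mem_edgeFinset.mpr hadj

theorem pairwiseDisjoint_lowerEdges (S : Set V) : S.PairwiseDisjoint (G.lowerEdges r) := by
  intro v _ v' _ hvv'
  refine Finset.disjoint_left.mpr fun e he he' => ?_
  obtain ⟨u, -, hu, rfl⟩ := mem_lowerEdges.mp he
  obtain ⟨u', -, hu', heq⟩ := mem_lowerEdges.mp he'
  rcases Sym2.eq_iff.mp heq with ⟨h, -⟩ | ⟨rfl, rfl⟩
  · exact hvv' h.symm
  · omega

theorem disjoint_lowerEdges_sym2 (hv : v ∉ D) : Disjoint (G.lowerEdges r v) D.sym2 := by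
  refine Finset.disjoint_left.mpr fun e he he' => ?_
  obtain ⟨u, -, -, rfl⟩ := mem_lowerEdges.mp he
  exact hv (Finset.mk_mem_sym2_iff.mp he').1

theorem disjoint_lowerEdges_incidenceFinset (hvw : v ≠ w) (hr : r v ≤ r w) :
    Disjoint (G.lowerEdges r v) (G.incidenceFinset w) := by
  refine Finset.disjoint_left.mpr fun e he he' => ?_
  obtain ⟨u, -, hu, rfl⟩ := mem_lowerEdges.mp he
  rcases Sym2.mem_iff.mp (G.mem_incidenceFinset _ _ |>.mp he').2 with rfl | rfl
  · exact hvw rfl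
  · omega

theorem disjoint_sym2_incidenceFinset (hw : w ∉ D) :
    Disjoint D.sym2 (G.incidenceFinset w) :=
  Finset.disjoint_left.mpr fun _ he he' =>
    hw (Finset.mem_sym2_iff.mp he w (G.mem_incidenceFinset _ _ |>.mp he').2)

theorem card_edgeFinset_induce [Fintype (G.induce (D : Set V)).edgeSet] :
    #(G.induce (D : Set V)).edgeFinset = #(G.edgeFinset ∩ D.sym2) := by
  rw [← filter_edgeFinset_toFinset_subset, card_filter_edgeFinset_toFinset_subset]
  congr!

theorem sum_card_lowerEdges_add_card_add_degree_le (hS : Disjoint S D) (hwS : w ∉ S)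
    (hwD : w ∉ D) (hr : ∀ v ∈ S, r v ≤ r w) :
    ∑ v ∈ S, #(G.lowerEdges r v) + #(G.edgeFinset ∩ D.sym2) + G.degree w ≤ #G.edgeFinset := by
  have hSD : Disjoint (S.biUnion (G.lowerEdges r)) D.sym2 :=
    (disjoint_biUnion_left _ _ _).mpr fun v hv =>
      disjoint_lowerEdges_sym2 (Finset.disjoint_left.mp hS hv)
  have hSw : Disjoint (S.biUnion (G.lowerEdges r)) (G.incidenceFinset w) :=
    (disjoint_biUnion_left _ _ _).mpr fun v hv =>
      disjoint_lowerEdges_incidenceFinset (ne_of_mem_of_not_mem hv hwS) (hr v hv)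
  rw [← card_biUnion (pairwiseDisjoint_lowerEdges _), ← card_incidenceFinset_eq_degree,
    ← card_union_of_disjoint (hSD.mono_right inter_subset_right),
    ← card_union_of_disjoint (disjoint_union_left.mpr
      ⟨hSw, (disjoint_sym2_incidenceFinset hwD).mono_left inter_subset_right⟩)]
  refine card_le_card <|
    union_subset (union_subset ?_ inter_subset_left) (G.incidenceFinset_subset w)
  exact biUnion_subset.mpr fun _ _ => lowerEdges_subset_edgeFinset

end SimpleGraph

open scoped Classical in
theorem stmt12_general {V : Type*} [Fintype V] [DecidableEq V] (G : SimpleGraph V) [DecidableRel G.Adj]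
    (τ : V → ℤ) (D : Finset V) (hD : DynMono G τ D)
    (hne : Dᶜ.Nonempty) :
    ∑ v ∈ Dᶜ, τ v ≤ (G.edgeFinset.card : ℤ)
      - ((G.induce (↑D : Set V)).edgeFinset.card : ℤ)
      - (G.minDegree : ℤ) + Dᶜ.sup' hne τ := by
  obtain ⟨r, hr⟩ := hD.exists_rank
  obtain ⟨w, hw, hw_max⟩ := exists_max_image Dᶜ r hne
  have hcount := G.sum_card_lowerEdges_add_card_add_degree_le (S := Dᶜ.erase w)
    (disjoint_left.mpr fun v hv => mem_compl.mp (mem_of_mem_erase hv)) (notMem_erase w _)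
    (mem_compl.mp hw) fun v hv => hw_max v (mem_of_mem_erase hv)
  have hsum : ∑ v ∈ Dᶜ.erase w, τ v ≤ ∑ v ∈ Dᶜ.erase w, (#(G.lowerEdges r v) : ℤ) :=
    sum_le_sum fun v hv => by
      rw [SimpleGraph.card_lowerEdges]
      exact hr v (mem_compl.mp (mem_of_mem_erase hv))
  rw [← sum_erase_add _ _ hw, SimpleGraph.card_edgeFinset_induce]
  have := G.minDegree_le_degree w
  have := le_sup' τ hw
  zify at hcount
  omega

open scoped Classical in
theorem stmt12 {V : Type*} [Fintype V] [DecidableEq V] (G : SimpleGraph V) [DecidableRel G.Adj]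
    (τ : V → ℤ) (hτ : ∀ v, τ v ≤ G.degree v) (D : Finset V) (hD : DynMono G τ D)
    (hne : Dᶜ.Nonempty) :
    ∑ v ∈ Dᶜ, τ v ≤ (G.edgeFinset.card : ℤ)
      - ((G.induce (↑D : Set V)).edgeFinset.card : ℤ)
      - (G.minDegree : ℤ) + Dᶜ.sup' hne τ :=
  stmt12_general G τ D hD hne
end

section
/- Let κ : V(G) → ℕ be positive-valued on a graph G with m edges. Set α = max{deg(v) − κ(v) : v ∈ V(G)} and β = min{deg(v) − κ(v) : v ∈ V(G)}, and assume β > 0. Then every κ-degenerate induced subgraph H of G satisfies |V(H)| ≤ (m − δ(G) + α)/β, where δ(G) is the minimum degree of G. -/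
/-!
List `H` as `v₁, …, v_h` witnessing its `κ`-degeneracy. Counting each edge of `G[H]` at its later
endpoint gives `e(H) ≤ ∑_{v ∈ H} κ v - κ v₁`, because `v₁` has no earlier neighbour. An edge of
`G` has at most two ends in `H`, and at most one unless it lies in `G[H]`, so
`∑_{v ∈ H} deg v ≤ m + e(H)`. Together,
`β |H| ≤ ∑_{v ∈ H} (deg v - κ v) ≤ m - κ v₁ ≤ m - deg v₁ + α ≤ m - δ(G) + α`.
-/

open Finset

theorem Sym2.card_filter_mem_le_of_not_isDiag {V : Type*} [DecidableEq V] (A : Finset V)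
    {e : Sym2 V} (he : ¬e.IsDiag) : #{v ∈ A | v ∈ e} ≤ if e ∈ A.sym2 then 2 else 1 := by
  have hsub : {v ∈ A | v ∈ e} ⊆ e.toFinset := fun v hv =>
    Sym2.mem_toFinset.2 (Finset.mem_filter.1 hv).2
  have hcard : #e.toFinset = 2 := Sym2.card_toFinset_of_not_isDiag e he
  split_ifs with hA
  · exact hcard ▸ Finset.card_le_card hsub
  · obtain ⟨a, hae, haA⟩ : ∃ a ∈ e, a ∉ A := by simpa [Finset.mem_sym2_iff] using hA
    have : {v ∈ A | v ∈ e} ⊆ e.toFinset.erase a := fun v hv =>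
      Finset.mem_erase.2 ⟨fun h => haA (h ▸ (Finset.mem_filter.1 hv).1), hsub hv⟩
    simpa [Finset.card_erase_of_mem (Sym2.mem_toFinset.2 hae), hcard] using Finset.card_le_card this

namespace SimpleGraph

variable {V : Type*} [DecidableEq V] (G : SimpleGraph V) [DecidableRel G.Adj]

theorem card_edgeFinset_inter_sym2_insert_le [Fintype G.edgeSet] (w : V) (A : Finset V) :
    #(G.edgeFinset ∩ (insert w A).sym2) ≤ #(G.edgeFinset ∩ A.sym2) + #{u ∈ A | G.Adj w u} := by
  have hsub : G.edgeFinset ∩ (insert w A).sym2 ⊆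
      {u ∈ A | G.Adj w u}.image (fun u => s(w, u)) ∪ (G.edgeFinset ∩ A.sym2) := by
    rw [Finset.sym2_insert, Finset.inter_union_distrib_left]
    refine Finset.union_subset_union (fun e he => ?_) le_rfl
    simp only [Finset.mem_inter, Finset.mem_image, mem_edgeFinset] at he
    obtain ⟨he, u, hu, rfl⟩ := he
    have hwu : G.Adj w u := he
    have huA : u ∈ A := (Finset.mem_insert.1 hu).resolve_left hwu.ne.symm
    exact Finset.mem_image_of_mem _ (Finset.mem_filter.2 ⟨huA, hwu⟩)
  calc _ ≤ _ := Finset.card_le_card hsub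
    _ ≤ _ := Finset.card_union_le _ _
    _ ≤ _ := by rw [add_comm]; gcongr; exact Finset.card_image_le

theorem sum_degree_le_card_edgeFinset_add [Fintype V] (A : Finset V) :
    ∑ v ∈ A, G.degree v ≤ #G.edgeFinset + #(G.edgeFinset ∩ A.sym2) := by
  calc ∑ v ∈ A, G.degree v = ∑ e ∈ G.edgeFinset, #{v ∈ A | v ∈ e} := by
        simp_rw [← card_incidenceFinset_eq_degree, incidenceFinset_eq_filter]
        exact Finset.sum_card_bipartiteAbove_eq_sum_card_bipartiteBelow _
    _ ≤ ∑ e ∈ G.edgeFinset, (1 + if e ∈ A.sym2 then 1 else 0) := by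
        refine Finset.sum_le_sum fun e he => ?_
        have := Sym2.card_filter_mem_le_of_not_isDiag A
          (G.not_isDiag_of_mem_edgeSet (mem_edgeFinset.1 he))
        split_ifs at this ⊢ <;> omega
    _ = #G.edgeFinset + #(G.edgeFinset ∩ A.sym2) := by
        rw [Finset.sum_add_distrib, Finset.sum_boole, Finset.filter_mem_eq_inter]
        simp

end SimpleGraph

section KDegenerate

variable {V : Type*} {G : SimpleGraph V} [DecidableRel G.Adj] {κ : V → ℕ}

def IsKDegenOrder (G : SimpleGraph V) [DecidableRel G.Adj] (κ : V → ℕ) (l : List V) : Prop :=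
  ∀ i : Fin l.length,
    ((l.take i).filter (fun u => decide (G.Adj (l.get i) u))).length ≤ κ (l.get i)

theorem IsKDegenOrder.of_append_singleton {l : List V} {w : V}
    (h : IsKDegenOrder G κ (l ++ [w])) :
    IsKDegenOrder G κ l ∧ (l.filter (fun u => decide (G.Adj w u))).length ≤ κ w := by
  refine ⟨fun i => ?_, by simpa using h ⟨l.length, by simp⟩⟩
  have hi : (i : ℕ) < (l ++ [w]).length := by simp
  have := h ⟨i, hi⟩
  rwa [List.get_eq_getElem, List.getElem_append_left i.isLt,
    List.take_append_of_le_length i.isLt.le] at this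

variable [DecidableEq V]

theorem IsKDegenOrder.card_edgeFinset_inter_sym2_add_le_sum [Fintype G.edgeSet] {l : List V}
    (hnd : l.Nodup) (hl : IsKDegenOrder G κ l) (hne : l ≠ []) :
    #(G.edgeFinset ∩ l.toFinset.sym2) + κ (l.head hne) ≤ ∑ v ∈ l.toFinset, κ v := by
  induction l using List.reverseRecOn with
  | nil => exact absurd rfl hne
  | append_singleton l w ih =>
    obtain ⟨hl, hw⟩ := hl.of_append_singleton
    rcases eq_or_ne l [] with rfl | hl'
    · simp [Finset.sym2_singleton]
    obtain ⟨hnd, hwl⟩ : l.Nodup ∧ ∀ u ∈ l, u ≠ w := by simpa [List.nodup_append] using hnd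
    have hback : #{u ∈ l.toFinset | G.Adj w u} ≤ κ w := by
      have : {u ∈ l.toFinset | G.Adj w u} = (l.filter (fun u => decide (G.Adj w u))).toFinset := by
        ext; simp
      rwa [this, List.toFinset_card_of_nodup (hnd.filter _)]
    have hstep := G.card_edgeFinset_inter_sym2_insert_le w l.toFinset
    have hih := ih hnd hl hl'
    have hins : (l ++ [w]).toFinset = insert w l.toFinset := by ext; simp
    rw [List.head_append_of_ne_nil hl', hins,
      Finset.sum_insert (fun h => hwl w (List.mem_toFinset.1 h) rfl)]
    omega

theorem KDegenOn.exists_card_edgeFinset_inter_sym2_add_le_sum [Fintype G.edgeSet] {A : Finset V}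
    (h : KDegenOn G κ A) (hA : A.Nonempty) :
    ∃ v ∈ A, #(G.edgeFinset ∩ A.sym2) + κ v ≤ ∑ u ∈ A, κ u := by
  obtain ⟨l, hnd, rfl, hl⟩ := h
  have hne : l ≠ [] := by rintro rfl; simp at hA
  exact ⟨l.head hne, List.mem_toFinset.2 (l.head_mem hne),
    IsKDegenOrder.card_edgeFinset_inter_sym2_add_le_sum hnd hl hne⟩

theorem KDegenOn.exists_sum_degree_sub_le [Fintype V] {A : Finset V} (h : KDegenOn G κ A)
    (hA : A.Nonempty) :
    ∃ v ∈ A, ∑ u ∈ A, ((G.degree u : ℤ) - κ u) ≤ #G.edgeFinset - κ v := by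
  obtain ⟨v, hv, hκ⟩ := h.exists_card_edgeFinset_inter_sym2_add_le_sum hA
  have hdeg := G.sum_degree_le_card_edgeFinset_add A
  refine ⟨v, hv, ?_⟩
  zify at hκ hdeg
  rw [Finset.sum_sub_distrib]
  linarith

end KDegenerate

theorem stmt13_general {V : Type*} [Fintype V] [DecidableEq V] [Nonempty V]
    (G : SimpleGraph V) [DecidableRel G.Adj] (κ : V → ℕ)
    (α β : ℤ)
    (hα : α = Finset.univ.sup' Finset.univ_nonempty (fun v => (G.degree v : ℤ) - κ v))
    (hβ : β = Finset.univ.inf' Finset.univ_nonempty (fun v => (G.degree v : ℤ) - κ v))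
    (hβpos : 0 < β) :
    ∀ H : Finset V, KDegenOn G κ H →
      (H.card : ℚ) ≤ ((G.edgeFinset.card : ℚ) - G.minDegree + α) / β := by
  intro H hH
  have hβle (v : V) : β ≤ (G.degree v : ℤ) - κ v := hβ ▸ Finset.inf'_le _ (Finset.mem_univ v)
  have hαge (v : V) : (G.degree v : ℤ) - κ v ≤ α := hα ▸ Finset.le_sup' (fun v => (G.degree v : ℤ) - κ v) (Finset.mem_univ v)
  have hδ (v : V) : (G.minDegree : ℤ) ≤ G.degree v := by exact_mod_cast G.minDegree_le_degree v
  suffices β * #H ≤ (#G.edgeFinset : ℤ) - G.minDegree + α by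
    rw [le_div_iff₀ (by exact_mod_cast hβpos), mul_comm]
    exact_mod_cast this
  rcases H.eq_empty_or_nonempty with rfl | hne
  · obtain ⟨v⟩ := ‹Nonempty V›
    have hm : (G.degree v : ℤ) ≤ #G.edgeFinset := by exact_mod_cast G.degree_le_card_edgeFinset v
    rw [Finset.card_empty, Nat.cast_zero, mul_zero]
    linarith [hβle v, hαge v, hδ v]
  · obtain ⟨v, hv, hsum⟩ := hH.exists_sum_degree_sub_le hne
    calc β * #H = ∑ _ ∈ H, β := by rw [Finset.sum_const, nsmul_eq_mul, mul_comm]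
      _ ≤ ∑ u ∈ H, ((G.degree u : ℤ) - κ u) := Finset.sum_le_sum fun u _ => hβle u
      _ ≤ #G.edgeFinset - κ v := hsum
      _ ≤ #G.edgeFinset - G.minDegree + α := by linarith [hαge v, hδ v]

theorem stmt13 {V : Type*} [Fintype V] [DecidableEq V] [Nonempty V]
    (G : SimpleGraph V) [DecidableRel G.Adj] (κ : V → ℕ) (hκ : ∀ v, 0 < κ v)
    (α β : ℤ)
    (hα : α = Finset.univ.sup' Finset.univ_nonempty (fun v => (G.degree v : ℤ) - κ v))
    (hβ : β = Finset.univ.inf' Finset.univ_nonempty (fun v => (G.degree v : ℤ) - κ v))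
    (hβpos : 0 < β) :
    ∀ H : Finset V, KDegenOn G κ H →
      (H.card : ℚ) ≤ ((G.edgeFinset.card : ℚ) - G.minDegree + α) / β :=
  stmt13_general G κ α β hα hβ hβpos
end
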